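/- For every x with 0.301 < x < π/2, one has tan x < x·(8 + b(x))/(π² − 4x²) where b(x) = (8/π)(π/2 − x) + (16/π² − 8/3)(π/2 − x)² + (32/π³ − 8/(3π))(π/2 − x)³; in particular (π² − 4x²)·tan x is bounded above by x·(8 + b(x)). -/

import Mathlib

/-!
Put `t = π/2 - x`, so that `tan x = cos t / sin t` and `π² - 4x² = 4t(π - t)`. The claim becomes
`4(π - t) · t cot t < x (8 + b)`. Alternating Taylor bounds for `sin` and `cos`, obtained by
integrating `cos ≤ 1` repeatedly, show that `t cot t` lies below its degree-6 Taylor polynomial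
`Q(t) = 1 - t²/3 - t⁴/45 - 2t⁶/945` for `0 < t ≤ √2`. Finally `x (8 + b) - 4(π - t) Q(t)` is `t⁴`
times a cubic in `t` that stays positive for `t ≤ 1.27`, i.e. for `x ≥ 0.301`.
-/

open Real Finset Nat

theorem le_of_hasDerivAt_le {f g f' g' : ℝ → ℝ} {a : ℝ}
    (hf : ∀ t, HasDerivAt f (f' t) t) (hg : ∀ t, HasDerivAt g (g' t) t)
    (ha : f a ≤ g a) (h' : ∀ t, a ≤ t → f' t ≤ g' t) {t : ℝ} (ht : a ≤ t) : f t ≤ g t := by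
  have hmono : MonotoneOn (g - f) (Set.Ici a) :=
    monotoneOn_of_hasDerivWithinAt_nonneg (convex_Ici a)
      (fun s _ => ((hg s).sub (hf s)).continuousAt.continuousWithinAt)
      (fun s _ => ((hg s).sub (hf s)).hasDerivWithinAt)
      (fun s hs => sub_nonneg.2 (h' s (interior_subset hs)))
  have := hmono Set.self_mem_Ici ht ht
  simp only [Pi.sub_apply] at this
  linarith

noncomputable def sinTaylor (n : ℕ) (t : ℝ) : ℝ :=
  ∑ k ∈ range n, (-1) ^ k * t ^ (2 * k + 1) / (2 * k + 1)!

noncomputable def cosTaylor (n : ℕ) (t : ℝ) : ℝ :=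
  ∑ k ∈ range n, (-1) ^ k * t ^ (2 * k) / (2 * k)!

@[simp]
theorem sinTaylor_zero_right (n : ℕ) : sinTaylor n 0 = 0 := by
  simp [sinTaylor]

@[simp]
theorem cosTaylor_succ_zero_right (n : ℕ) : cosTaylor (n + 1) 0 = 1 := by
  simp [cosTaylor, sum_range_succ']

theorem hasDerivAt_sinTaylor (n : ℕ) (t : ℝ) : HasDerivAt (sinTaylor n) (cosTaylor n t) t := by
  refine HasDerivAt.fun_sum fun k _ => ?_
  refine (((hasDerivAt_pow (2 * k + 1) t).const_mul ((-1 : ℝ) ^ k)).div_const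
    ((2 * k + 1)! : ℝ)).congr_deriv ?_
  rw [Nat.factorial_succ]
  push_cast
  field_simp

theorem hasDerivAt_cosTaylor (n : ℕ) (t : ℝ) :
    HasDerivAt (cosTaylor (n + 1)) (-sinTaylor n t) t := by
  have hsum := HasDerivAt.fun_sum (u := range n) fun k _ =>
    ((hasDerivAt_pow (2 * (k + 1)) t).const_mul ((-1 : ℝ) ^ (k + 1))).div_const
      ((2 * (k + 1))! : ℝ)
  have hcos : cosTaylor (n + 1) =
      fun t => ∑ k ∈ range n, (-1 : ℝ) ^ (k + 1) * t ^ (2 * (k + 1)) / (2 * (k + 1))! + 1 := by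
    ext t
    simp [cosTaylor, sum_range_succ']
  rw [hcos, sinTaylor, ← sum_neg_distrib]
  refine (hsum.add_const 1).congr_deriv (sum_congr rfl fun k _ => ?_)
  rw [show 2 * (k + 1) = 2 * k + 1 + 1 by ring, Nat.factorial_succ]
  push_cast
  field_simp
  ring

section TaylorBounds

variable {n : ℕ} {t : ℝ}

theorem sin_le_sinTaylor (h : ∀ s, 0 ≤ s → cos s ≤ cosTaylor n s) (ht : 0 ≤ t) :
    sin t ≤ sinTaylor n t :=
  le_of_hasDerivAt_le hasDerivAt_sin (hasDerivAt_sinTaylor n) (by simp) h ht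

theorem sinTaylor_le_sin (h : ∀ s, 0 ≤ s → cosTaylor n s ≤ cos s) (ht : 0 ≤ t) :
    sinTaylor n t ≤ sin t :=
  le_of_hasDerivAt_le (hasDerivAt_sinTaylor n) hasDerivAt_sin (by simp) h ht

theorem cosTaylor_succ_le_cos (h : ∀ s, 0 ≤ s → sin s ≤ sinTaylor n s) (ht : 0 ≤ t) :
    cosTaylor (n + 1) t ≤ cos t :=
  le_of_hasDerivAt_le (hasDerivAt_cosTaylor n) hasDerivAt_cos (by simp)
    (fun s hs => neg_le_neg (h s hs)) ht

theorem cos_le_cosTaylor_succ (h : ∀ s, 0 ≤ s → sinTaylor n s ≤ sin s) (ht : 0 ≤ t) :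
    cos t ≤ cosTaylor (n + 1) t :=
  le_of_hasDerivAt_le hasDerivAt_cos (hasDerivAt_cosTaylor n) (by simp)
    (fun s hs => neg_le_neg (h s hs)) ht

theorem cos_le_cosTaylor_two_mul_add_one (m : ℕ) (ht : 0 ≤ t) :
    cos t ≤ cosTaylor (2 * m + 1) t := by
  induction m generalizing t with
  | zero => simpa [cosTaylor] using cos_le_one t
  | succ m ih =>
    have hsin : ∀ s, 0 ≤ s → sin s ≤ sinTaylor (2 * m + 1) s :=
      fun _ => sin_le_sinTaylor fun _ => ih
    have hcos : ∀ s, 0 ≤ s → cosTaylor (2 * m + 2) s ≤ cos s :=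
      fun _ => cosTaylor_succ_le_cos hsin
    have hsin' : ∀ s, 0 ≤ s → sinTaylor (2 * m + 2) s ≤ sin s :=
      fun _ => sinTaylor_le_sin hcos
    exact cos_le_cosTaylor_succ hsin' ht

theorem sinTaylor_two_mul_add_two_le_sin (m : ℕ) (ht : 0 ≤ t) :
    sinTaylor (2 * m + 2) t ≤ sin t :=
  sinTaylor_le_sin (fun _ => cosTaylor_succ_le_cos
    fun _ => sin_le_sinTaylor fun _ => cos_le_cosTaylor_two_mul_add_one m) ht

theorem mul_cos_lt_sin_mul (ht0 : 0 < t) (ht2 : t ^ 2 ≤ 2) :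
    t * cos t < sin t * (1 - t ^ 2 / 3 - t ^ 4 / 45 - 2 * t ^ 6 / 945) := by
  have hcos : cos t ≤ 1 - t ^ 2 / 2 + t ^ 4 / 24 - t ^ 6 / 720 + t ^ 8 / 40320 := by
    have := cos_le_cosTaylor_two_mul_add_one 2 ht0.le
    norm_num [cosTaylor, sum_range_succ, Nat.factorial] at this
    linarith
  have hsin : t - t ^ 3 / 6 + t ^ 5 / 120 - t ^ 7 / 5040 ≤ sin t := by
    have := sinTaylor_two_mul_add_two_le_sin 1 ht0.le
    norm_num [sinTaylor, sum_range_succ, Nat.factorial] at this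
    linarith
  have hQ : 0 ≤ 1 - t ^ 2 / 3 - t ^ 4 / 45 - 2 * t ^ 6 / 945 := by
    nlinarith [pow_two_nonneg (t ^ 2)]
  have hpoly : t * (1 - t ^ 2 / 2 + t ^ 4 / 24 - t ^ 6 / 720 + t ^ 8 / 40320) <
      (t - t ^ 3 / 6 + t ^ 5 / 120 - t ^ 7 / 5040) *
        (1 - t ^ 2 / 3 - t ^ 4 / 45 - 2 * t ^ 6 / 945) := by
    have hquartic : 0 < 379 - 24 * t ^ 2 + 16 / 21 * t ^ 4 := by
      nlinarith [sq_nonneg (t ^ 2 - 15)]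
    rw [← sub_pos]
    calc 0 < t ^ 9 * (379 - 24 * t ^ 2 + 16 / 21 * t ^ 4) / 1814400 := by positivity
      _ = _ := by ring
  calc t * cos t ≤ t * (1 - t ^ 2 / 2 + t ^ 4 / 24 - t ^ 6 / 720 + t ^ 8 / 40320) := by gcongr
    _ < _ := hpoly
    _ ≤ _ := by gcongr

end TaylorBounds

theorem four_mul_pi_div_two_add_mul_le (x : ℝ) (hx : 0.301 ≤ x) :
    4 * (π / 2 + x) *
        (1 - (π / 2 - x) ^ 2 / 3 - (π / 2 - x) ^ 4 / 45 - 2 * (π / 2 - x) ^ 6 / 945) ≤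
      x * (8 + ((8 / π) * (π / 2 - x) + (16 / π ^ 2 - 8 / 3) * (π / 2 - x) ^ 2 +
        (32 / π ^ 3 - 8 / (3 * π)) * (π / 2 - x) ^ 3)) := by
  have hπ := pi_gt_d6
  have hπ' := pi_lt_d6
  obtain ⟨t, rfl⟩ : ∃ t, x = π / 2 - t := ⟨π / 2 - x, by ring⟩
  simp only [sub_sub_cancel]
  have ht : t ≤ 1.27 := by linarith
  have hconst : 0.0960 ≤ 8 / (3 * π) - 32 / π ^ 3 + 4 * π / 45 := by
    have h3 : 0.84882 ≤ 8 / (3 * π) := by rw [le_div_iff₀ (by positivity)]; linarith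
    have h4 : 32 / π ^ 3 ≤ 1.03205 := by
      rw [div_le_iff₀ (by positivity)]
      nlinarith [mul_pos pi_pos pi_pos]
    linarith
  have hcubic : 4 / 45 * t - 8 * π / 945 * t ^ 2 + 8 / 945 * t ^ 3 ≤ 0.0874 := by
    nlinarith [sq_nonneg t, sq_nonneg (t - 1.27), mul_nonneg (sq_nonneg t) (sub_nonneg.2 ht)]
  rw [← sub_nonneg]
  calc 0 ≤ t ^ 4 * (8 / (3 * π) - 32 / π ^ 3 + 4 * π / 45 - 4 / 45 * t + 8 * π / 945 * t ^ 2
        - 8 / 945 * t ^ 3) := mul_nonneg (by positivity) (by linarith)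
    _ = _ := by field_simp; ring

theorem stmt17 (x : ℝ) (h0 : 0.301 < x) (h1 : x < π / 2) :
    Real.tan x < x * (8 + ((8 / π) * (π / 2 - x) + (16 / π ^ 2 - 8 / 3) * (π / 2 - x) ^ 2 +
      (32 / π ^ 3 - 8 / (3 * π)) * (π / 2 - x) ^ 3)) / (π ^ 2 - 4 * x ^ 2) ∧
    (π ^ 2 - 4 * x ^ 2) * Real.tan x ≤
      x * (8 + ((8 / π) * (π / 2 - x) + (16 / π ^ 2 - 8 / 3) * (π / 2 - x) ^ 2 +
        (32 / π ^ 3 - 8 / (3 * π)) * (π / 2 - x) ^ 3)) := by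
  have hπ := pi_lt_d2
  have ht0 : 0 < π / 2 - x := by linarith
  have hsin : 0 < sin (π / 2 - x) := sin_pos_of_pos_of_lt_pi ht0 (by linarith)
  have hD : 0 < π ^ 2 - 4 * x ^ 2 := by nlinarith
  have key : (π ^ 2 - 4 * x ^ 2) * tan x < x * (8 + ((8 / π) * (π / 2 - x) +
      (16 / π ^ 2 - 8 / 3) * (π / 2 - x) ^ 2 + (32 / π ^ 3 - 8 / (3 * π)) * (π / 2 - x) ^ 3)) :=
    calc (π ^ 2 - 4 * x ^ 2) * tan x
        = 4 * (π / 2 + x) * ((π / 2 - x) * cos (π / 2 - x) / sin (π / 2 - x)) := by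
          rw [tan_eq_sin_div_cos, cos_pi_div_two_sub, sin_pi_div_two_sub]
          ring
      _ < 4 * (π / 2 + x) * (1 - (π / 2 - x) ^ 2 / 3 - (π / 2 - x) ^ 4 / 45 -
          2 * (π / 2 - x) ^ 6 / 945) := by
          gcongr
          exact (div_lt_iff₀' hsin).2 (mul_cos_lt_sin_mul ht0 (by nlinarith))
      _ ≤ _ := four_mul_pi_div_two_add_mul_le x h0.le
  exact ⟨(lt_div_iff₀ hD).2 (by linarith), key.le⟩
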